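/- arXiv:1704.07164 — 2 statements merged into one kernel-verified Lean document; each statement's English description precedes it below -/
import Mathlib

section
/- Let P be a nonempty compact convex subset of ℝ^n and let v₀, v₁, v₂ be unit vectors with v₁ on a geodesic of length at most π from v₀ to v₂ in the unit sphere. Write φᵢ(x) = ⟨vᵢ, x⟩. If F_{φ₁}(P) ∩ F_{φ₂}(P) is nonempty, then max_{x ∈ F_{φ₂}(P)} φ₀(x) = max_{x ∈ F_{φ₁}(P) ∩ F_{φ₂}(P)} φ₀(x). -/
open scoped RealInnerProductSpace

/-- The face of `P` in the direction of the vector `v`, i.e. the set of points of `P`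
maximizing `x ↦ ⟪v, x⟫`. -/
def faceI {n : ℕ} (v : EuclideanSpace ℝ (Fin n)) (P : Set (EuclideanSpace ℝ (Fin n))) :
    Set (EuclideanSpace ℝ (Fin n)) :=
  {p ∈ P | ∀ q ∈ P, ⟪v, q⟫ ≤ ⟪v, p⟫}

/-- Step 2 of Lemma 3.2: if `v₁` lies on a geodesic of length at most `π` from `v₀`
to `v₂` and the faces of `P` in directions `v₁` and `v₂` intersect, then the maximum
of `⟪v₀, ·⟫` over the face in direction `v₂` is attained on that intersection. -/
theorem max_on_face_intersection {n : ℕ} (P : Set (EuclideanSpace ℝ (Fin n)))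
    (hne : P.Nonempty) (hc : IsCompact P) (hconv : Convex ℝ P)
    (v₀ v₁ v₂ : EuclideanSpace ℝ (Fin n))
    (h₀ : ‖v₀‖ = 1) (h₁ : ‖v₁‖ = 1) (h₂ : ‖v₂‖ = 1)
    (a b : ℝ) (ha : 0 ≤ a) (hb : 0 ≤ b) (hab : a • v₀ + b • v₂ ≠ 0)
    (hv₁ : v₁ = ‖a • v₀ + b • v₂‖⁻¹ • (a • v₀ + b • v₂))
    (hint : (faceI v₁ P ∩ faceI v₂ P).Nonempty) :
    sSup ((fun x => ⟪v₀, x⟫) '' faceI v₂ P) =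
      sSup ((fun x => ⟪v₀, x⟫) '' (faceI v₁ P ∩ faceI v₂ P)) := by
  rcases hint with ⟨x, hx₁, hx₂⟩
  by_cases haz : a = 0
  · subst haz
    have hb' : b ≠ 0 := by rintro rfl; simp at hab
    have hbp : 0 < b := lt_of_le_of_ne hb (Ne.symm hb')
    have hv : v₁ = v₂ := by
      rw [hv₁]
      rw [zero_smul, zero_add, norm_smul, Real.norm_eq_abs, abs_of_pos hbp, h₂, mul_one,
        smul_smul, inv_mul_cancel₀ hb', one_smul]
    rw [hv, Set.inter_self]
  · have hap : 0 < a := lt_of_le_of_ne ha (Ne.symm haz)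
    have hnorm : (0:ℝ) < ‖a • v₀ + b • v₂‖ := norm_pos_iff.mpr hab
    have key : ∀ y ∈ faceI v₂ P, ⟪v₀, y⟫ ≤ ⟪v₀, x⟫ := by
      intro y hy
      have h1 : ⟪v₁, y⟫ ≤ ⟪v₁, x⟫ := hx₁.2 y hy.1
      rw [hv₁] at h1
      simp only [real_inner_smul_left, inner_add_left] at h1
      have h1' : a * ⟪v₀, y⟫ + b * ⟪v₂, y⟫ ≤ a * ⟪v₀, x⟫ + b * ⟪v₂, x⟫ := by
        have := (mul_le_mul_iff_right₀ (inv_pos.mpr hnorm)).mp h1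
        linarith
      have heq : ⟪v₂, y⟫ = ⟪v₂, x⟫ := le_antisymm (hx₂.2 y hy.1) (hy.2 x hx₂.1)
      nlinarith
    have hcont : Continuous fun y : EuclideanSpace ℝ (Fin n) => ⟪v₀, y⟫ :=
      continuous_const.inner continuous_id
    have hbddP : BddAbove ((fun y => ⟪v₀, y⟫) '' P) :=
      hc.bddAbove_image hcont.continuousOn
    have hsub : faceI v₁ P ∩ faceI v₂ P ⊆ faceI v₂ P := Set.inter_subset_right
    have hsubP : faceI v₂ P ⊆ P := fun y hy => hy.1
    have hbdd2 : BddAbove ((fun y => ⟪v₀, y⟫) '' faceI v₂ P) :=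
      hbddP.mono (Set.image_mono hsubP)
    have hbddI : BddAbove ((fun y => ⟪v₀, y⟫) '' (faceI v₁ P ∩ faceI v₂ P)) :=
      hbdd2.mono (Set.image_mono hsub)
    apply le_antisymm
    · refine csSup_le ⟨⟪v₀, x⟫, ⟨x, hx₂, rfl⟩⟩ ?_
      rintro z ⟨y, hy, rfl⟩
      exact (key y hy).trans (le_csSup hbddI ⟨x, ⟨hx₁, hx₂⟩, rfl⟩)
    · exact csSup_le_csSup hbdd2 ⟨⟪v₀, x⟫, ⟨x, ⟨hx₁, hx₂⟩, rfl⟩⟩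
        (Set.image_mono hsub)
end

section
/- For an injective group homomorphism f : ℤ^m → ℤ^n, the induced map on Grothendieck groups of integral polytopes, sending the class of P to the class of f(P) (with f extended ℝ-linearly), is injective. -/
open Set Pointwise

def intCoe {n : ℕ} (v : Fin n → ℤ) : Fin n → ℝ := fun i => (v i : ℝ)

def IsIntegralPolytope {n : ℕ} (P : Set (Fin n → ℝ)) : Prop :=
  ∃ S : Finset (Fin n → ℤ), S.Nonempty ∧ P = convexHull ℝ (intCoe '' ↑S)

/-- The integer matrix of an additive map `ℤ^m → ℤ^n`. -/
private def intMat {m n : ℕ} (f : (Fin m → ℤ) →+ (Fin n → ℤ)) :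
    Matrix (Fin n) (Fin m) ℤ :=
  Matrix.of fun j i => f (fun k => if i = k then 1 else 0) j

private lemma intMat_mulVec {m n : ℕ} (f : (Fin m → ℤ) →+ (Fin n → ℤ))
    (v : Fin m → ℤ) : (intMat f).mulVec v = f v := by
  have h := LinearMap.pi_apply_eq_sum_univ (f.toIntLinearMap) v
  funext j
  have h2 := congrFun h j
  simp only [AddMonoidHom.coe_toIntLinearMap, Finset.sum_apply, Pi.smul_apply,
    smul_eq_mul] at h2
  simp only [Matrix.mulVec, dotProduct, intMat, Matrix.of_apply]
  rw [h2]
  exact Finset.sum_congr rfl fun i _ => mul_comm _ _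

private lemma F_eq_mulVec {m n : ℕ} (f : (Fin m → ℤ) →+ (Fin n → ℤ))
    (F : (Fin m → ℝ) →ₗ[ℝ] (Fin n → ℝ))
    (hext : ∀ v : Fin m → ℤ, F (intCoe v) = intCoe (f v)) (x : Fin m → ℝ) :
    F x = ((intMat f).map (Int.cast : ℤ → ℝ)).mulVec x := by
  have h := LinearMap.pi_apply_eq_sum_univ F x
  funext j
  have h2 := congrFun h j
  simp only [Finset.sum_apply, Pi.smul_apply, smul_eq_mul] at h2
  have hF : ∀ i : Fin m, F (fun k => if i = k then (1:ℝ) else 0)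
      = intCoe (f (fun k => if i = k then 1 else 0)) := by
    intro i
    rw [← hext]
    congr 1
    funext k
    simp only [intCoe]
    split <;> simp
  simp only [Matrix.mulVec, dotProduct, Matrix.map_apply, intMat, Matrix.of_apply]
  rw [h2]
  refine Finset.sum_congr rfl fun i _ => ?_
  rw [hF i]
  simp only [intCoe]
  ring

private lemma matQ_mulVec_injective {m n : ℕ} (f : (Fin m → ℤ) →+ (Fin n → ℤ))
    (hf : Function.Injective f) :
    Function.Injective ((intMat f).map (Int.cast : ℤ → ℚ)).mulVec := by
  set Mq := (intMat f).map (Int.cast : ℤ → ℚ) with hMq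
  have hker : ∀ q : Fin m → ℚ, Mq.mulVec q = 0 → q = 0 := by
    intro q hq
    set d : ℤ := ∏ i, ((q i).den : ℤ) with hd
    have hdpos : 0 < d := Finset.prod_pos fun i _ => by exact_mod_cast (q i).pos
    have hint : ∀ i : Fin m, ∃ z : ℤ, (z : ℚ) = (d : ℚ) * q i := by
      intro i
      have hdvd : ((q i).den : ℤ) ∣ d := Finset.dvd_prod_of_mem _ (Finset.mem_univ i)
      obtain ⟨c, hc⟩ := hdvd
      refine ⟨c * (q i).num, ?_⟩
      have hden : ((q i).den : ℚ) ≠ 0 := by exact_mod_cast (q i).den_nz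
      have hnum : ((q i).num : ℚ) = q i * ((q i).den : ℚ) :=
        (div_eq_iff hden).mp (Rat.num_div_den (q i))
      push_cast
      rw [hnum, hc]
      push_cast
      ring
    choose v hv using hint
    have hcast : Mq.mulVec (fun i => (v i : ℚ)) = 0 := by
      have : (fun i => (v i : ℚ)) = (d : ℚ) • q := by
        funext i; rw [hv i]; simp
      rw [this, Matrix.mulVec_smul, hq, smul_zero]
    have hz : (intMat f).mulVec v = 0 := by
      funext j
      have := congrFun hcast j
      simp only [Matrix.mulVec, dotProduct, Matrix.map_apply, hMq,
        Pi.zero_apply] at this ⊢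
      exact_mod_cast this
    rw [intMat_mulVec] at hz
    have hv0 : v = 0 := hf (by rw [hz, map_zero])
    funext i
    have := hv i
    rw [hv0] at this
    simp only [Pi.zero_apply, Int.cast_zero] at this
    have hd0 : (d : ℚ) ≠ 0 := by exact_mod_cast hdpos.ne'
    have := (mul_eq_zero.mp this.symm).resolve_left hd0
    simpa using this
  intro a b hab
  have : Mq.mulVec (a - b) = 0 := by
    rw [Matrix.mulVec_sub, hab, sub_self]
  have := hker _ this
  exact sub_eq_zero.mp this

private lemma F_injective {m n : ℕ} (f : (Fin m → ℤ) →+ (Fin n → ℤ))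
    (hf : Function.Injective f) (F : (Fin m → ℝ) →ₗ[ℝ] (Fin n → ℝ))
    (hext : ∀ v : Fin m → ℤ, F (intCoe v) = intCoe (f v)) :
    Function.Injective F := by
  classical
  set Mq := (intMat f).map (Int.cast : ℤ → ℚ) with hMq
  have hinj : Function.Injective (Matrix.toLin' Mq) := by
    have h := matQ_mulVec_injective f hf
    intro a b hab
    apply h
    rwa [← Matrix.toLin'_apply, ← Matrix.toLin'_apply]
  obtain ⟨g, hg⟩ := (Matrix.toLin' Mq).exists_leftInverse_of_injective
    (LinearMap.ker_eq_bot.mpr hinj)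
  set B := LinearMap.toMatrix' g with hB
  have hBM : B * Mq = 1 := by
    have := congrArg LinearMap.toMatrix' hg
    rwa [LinearMap.toMatrix'_comp, LinearMap.toMatrix'_toLin', LinearMap.toMatrix'_id]
      at this
  -- map everything to ℝ
  set φ : ℚ →+* ℝ := Rat.castHom ℝ with hφ
  set Mr : Matrix (Fin n) (Fin m) ℝ := (intMat f).map (Int.cast : ℤ → ℝ) with hMr
  have hMrq : Mq.map φ = Mr := by
    rw [Matrix.map_map]
    ext j i
    simp [hφ, hMr, Matrix.map_apply]
  have hBMr : (B.map φ) * Mr = 1 := by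
    rw [← hMrq, ← Matrix.map_mul, hBM, Matrix.map_one φ (map_zero φ) (map_one φ)]
  intro a b hab
  rw [F_eq_mulVec f F hext, F_eq_mulVec f F hext] at hab
  have := congrArg ((B.map φ).mulVec) hab
  rwa [Matrix.mulVec_mulVec, Matrix.mulVec_mulVec, hBMr, Matrix.one_mulVec,
    Matrix.one_mulVec] at this

/-- If `f : ℤ^m → ℤ^n` is an injective homomorphism with ℝ-linear extension `F`, then
the induced map on Grothendieck groups of integral polytopes is injective: if
`F(P) − F(Q)` equals `F(P') − F(Q')` then `P − Q = P' − Q'`. -/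
theorem induced_map_injective {m n : ℕ} (f : (Fin m → ℤ) →+ (Fin n → ℤ))
    (hf : Function.Injective f) (F : (Fin m → ℝ) →ₗ[ℝ] (Fin n → ℝ))
    (hext : ∀ v : Fin m → ℤ, F (intCoe v) = intCoe (f v))
    {P Q P' Q' : Set (Fin m → ℝ)}
    (hP : IsIntegralPolytope P) (hQ : IsIntegralPolytope Q)
    (hP' : IsIntegralPolytope P') (hQ' : IsIntegralPolytope Q')
    (h : F '' P + F '' Q' = F '' P' + F '' Q) :
    P + Q' = P' + Q := by
  have hFinj : Function.Injective F := F_injective f hf F hext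
  have h1 : F '' (P + Q') = F '' (P' + Q) := by
    rw [Set.image_add F, Set.image_add F, h]
  exact Set.image_injective.mpr hFinj h1
end
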